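/- Let G be a connected simple graph on n ≥ 2 vertices with diameter d and Wiener index W(G). Then DLS(G) ≥ (2n + d² − 2d + 1)/2 − 2W(G)/(n−1). -/

import Mathlib

open Finset Matrix Polynomial

/-- The transmission `Tr(v)` of a vertex `v`: the sum of the distances from `v`
to all other vertices of the graph. -/
noncomputable def transm {n : ℕ} (G : SimpleGraph (Fin n)) (v : Fin n) : ℝ :=
  ∑ u : Fin n, (G.dist v u : ℝ)

/-- The distance Laplacian matrix `D^L(G) = Diag(Tr) - D(G)` of a graph `G`. -/
noncomputable def distLap {n : ℕ} (G : SimpleGraph (Fin n)) : Matrix (Fin n) (Fin n) ℝ :=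
  Matrix.diagonal (transm G) - Matrix.of (fun u v : Fin n => (G.dist u v : ℝ))

/-- `IsDLSpec G μ` says that `μ 0 , μ 1 , …, μ (n-1)` are exactly the eigenvalues
(with multiplicity) of the distance Laplacian matrix of `G`; combined with `Antitone μ`
this means `μ ⟨i-1,_⟩ = ∂_i^L(G)` in the usual decreasing ordering. -/
def IsDLSpec {n : ℕ} (G : SimpleGraph (Fin n)) (μ : Fin n → ℝ) : Prop :=
  (distLap G).charpoly = ∏ i : Fin n, (X - C (μ i))

/-- The Wiener index `W(G) = (1/2) ∑_v Tr(v)`. -/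
noncomputable def wiener {n : ℕ} (G : SimpleGraph (Fin n)) : ℝ :=
  (∑ v : Fin n, transm G v) / 2

/-- The maximum transmission `Tr_max(G) = max_v Tr(v)`. -/
noncomputable def trMax {n : ℕ} (G : SimpleGraph (Fin n)) : ℝ :=
  ⨆ v : Fin n, transm G v

/-!
Let `v, w` realise the diameter `d`. Since `D^L 𝟙 = 0`, the Rayleigh quotient of `D^L` at
`n • e_v - 𝟙` is `n² Tr(v) / (n (n - 1))`, so `∂₁ ≥ n Tr(v) / (n - 1) ≥ Tr(v) + 1`; and the
vertices of a shortest `v`–`w` path lie at distances `0, 1, …, d` from `v`, so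
`Tr(v) ≥ d (d + 1) / 2 + (n - d - 1)`. On the other side, the eigenvalues are nonnegative and sum
to `trace D^L = 2 W`, so `(n - 1) ∂_{n-1} ≤ 2 W`.
-/

namespace Matrix

variable {ι : Type*} [Fintype ι]

theorem IsSymm.dotProduct_mulVec_sub_smul_one {R : Type*} [CommRing R] {A : Matrix ι ι R}
    (hA : A.IsSymm) (h1 : A *ᵥ 1 = 0) (x : ι → R) (c : R) :
    (x - c • 1) ⬝ᵥ (A *ᵥ (x - c • 1)) = x ⬝ᵥ (A *ᵥ x) := by
  have h1' : 1 ᵥ* A = 0 := by rw [← mulVec_transpose, hA.eq, h1]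
  rw [mulVec_sub, mulVec_smul, h1, smul_zero, sub_zero, sub_dotProduct, smul_dotProduct,
    dotProduct_mulVec 1, h1', zero_dotProduct, smul_zero, sub_zero]

variable [DecidableEq ι]

theorem trace_eq_sum_of_charpoly_eq_prod {R : Type*} [CommRing R] {A : Matrix ι ι R}
    {μ : ι → R} (h : A.charpoly = ∏ i, (X - C (μ i))) : A.trace = ∑ i, μ i := by
  rw [trace_eq_neg_charpoly_nextCoeff, h, prod_X_sub_C_nextCoeff, neg_neg]

theorem spectrum_eq_range_of_charpoly_eq_prod {K : Type*} [Field K] {A : Matrix ι ι K}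
    {μ : ι → K} (h : A.charpoly = ∏ i, (X - C (μ i))) : spectrum K A = Set.range μ := by
  ext r
  simp only [mem_spectrum_iff_isRoot_charpoly, h, IsRoot.def, eval_prod, eval_sub, eval_X, eval_C,
    prod_eq_zero_iff, sub_eq_zero, mem_univ, true_and, Set.mem_range]
  exact exists_congr fun _ => eq_comm

theorem IsHermitian.dotProduct_mulVec_le_of_spectrum_le {A : Matrix ι ι ℝ} (hA : A.IsHermitian)
    {c : ℝ} (hc : ∀ r ∈ spectrum ℝ A, r ≤ c) (x : ι → ℝ) : x ⬝ᵥ (A *ᵥ x) ≤ c * (x ⬝ᵥ x) := by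
  have hpsd : (algebraMap ℝ _ c - A).PosSemidef := by
    refine posSemidef_iff_isHermitian_and_spectrum_nonneg.2 ⟨?_, ?_⟩
    · rw [Algebra.algebraMap_eq_smul_one]
      exact (isHermitian_one.smul (IsSelfAdjoint.all c)).sub hA
    · rw [← spectrum.singleton_sub_eq]
      rintro _ ⟨_, rfl, r, hr, rfl⟩
      simpa using hc r hr
  simpa [Algebra.algebraMap_eq_smul_one, sub_mulVec, dotProduct_sub, smul_mulVec] using
    hpsd.dotProduct_mulVec_nonneg x

end Matrix

theorem Antitone.succ_nsmul_le_sum {α : Type*} [AddCommMonoid α] [PartialOrder α]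
    [IsOrderedAddMonoid α] {n : ℕ} {f : Fin n → α} (hf : Antitone f) (h0 : ∀ i, 0 ≤ f i)
    (k : Fin n) : (k + 1 : ℕ) • f k ≤ ∑ i, f i :=
  calc (k + 1 : ℕ) • f k = ∑ _i ∈ Iic k, f k := by rw [sum_const, Fin.card_Iic]
    _ ≤ ∑ i ∈ Iic k, f i := sum_le_sum fun i hi => hf (mem_Iic.mp hi)
    _ ≤ ∑ i, f i := sum_le_sum_of_subset_of_nonneg (subset_univ _) fun i _ _ => h0 i

namespace SimpleGraph

variable {V : Type*} {G : SimpleGraph V}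

theorem Walk.dist_getVert_of_length_eq_dist {u v : V} (p : G.Walk u v)
    (hp : p.length = G.dist u v) {k : ℕ} (hk : k ≤ p.length) : G.dist u (p.getVert k) = k := by
  have hle : G.dist u (p.getVert k) ≤ k := by
    simpa [Walk.take_length, hk] using dist_le (p.take k)
  have hdrop : G.dist (p.getVert k) v ≤ p.length - k := by
    simpa [Walk.drop_length] using dist_le (p.drop k)
  have := (p.drop k).reachable.dist_triangle_right u
  omega

theorem Connected.le_sum_dist [Fintype V] (hG : G.Connected) (v w : V) :
    ((G.dist v w : ℝ) * (G.dist v w + 1) / 2 + (Fintype.card V - (G.dist v w + 1)) : ℝ) ≤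
      ∑ u, (G.dist v u : ℝ) := by
  classical
  obtain ⟨p, hp⟩ := hG.exists_walk_length_eq_dist v w
  set k := G.dist v w
  have hdist : ∀ j ∈ range (k + 1), G.dist v (p.getVert j) = j := fun j hj =>
    p.dist_getVert_of_length_eq_dist hp (by rw [hp]; exact Nat.lt_succ_iff.mp (mem_range.mp hj))
  have hinj : Set.InjOn p.getVert (range (k + 1)) := fun i hi j hj hij => by
    rw [← hdist i hi, ← hdist j hj, hij]
  set S := (range (k + 1)).image p.getVert
  have hcard : S.card = k + 1 := by rw [card_image_of_injOn hinj, card_range]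
  have hS : ∑ u ∈ S, (G.dist v u : ℝ) = k * (k + 1) / 2 := by
    rw [sum_image hinj, sum_congr rfl fun j hj => by rw [hdist j hj]]
    have h := sum_range_id_mul_two (k + 1)
    rw [Nat.add_sub_cancel, mul_comm (k + 1)] at h
    rw [eq_div_iff two_ne_zero, ← Nat.cast_sum]
    exact_mod_cast h
  have hSc : (Fintype.card V - (k + 1) : ℝ) ≤ ∑ u ∈ Sᶜ, (G.dist v u : ℝ) := by
    have hvS : v ∈ S := mem_image.mpr ⟨0, by simp, p.getVert_zero⟩
    calc (Fintype.card V - (k + 1) : ℝ) = ∑ u ∈ Sᶜ, (1 : ℝ) := by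
          simp [card_compl, hcard, Nat.cast_sub (hcard ▸ card_le_univ S)]
      _ ≤ ∑ u ∈ Sᶜ, (G.dist v u : ℝ) := sum_le_sum fun u hu => by
          have hne : v ≠ u := fun h => (mem_compl.mp hu) (h ▸ hvS)
          exact_mod_cast hG.pos_dist_of_ne hne
  rw [← sum_add_sum_compl S, hS]
  linarith

end SimpleGraph

section DistanceLaplacian

variable {n : ℕ} (G : SimpleGraph (Fin n))

theorem distLap_isSymm : (distLap G).IsSymm := by
  ext u v
  by_cases h : u = v
  · subst h; rfl
  · simp [distLap, diagonal_apply_ne _ h, diagonal_apply_ne' _ h, SimpleGraph.dist_comm]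

theorem distLap_isHermitian : (distLap G).IsHermitian := distLap_isSymm G

theorem distLap_apply_self (v : Fin n) : distLap G v v = transm G v := by
  simp [distLap]

theorem distLap_mulVec_apply (x : Fin n → ℝ) (u : Fin n) :
    (distLap G *ᵥ x) u = transm G u * x u - ∑ w, (G.dist u w : ℝ) * x w := by
  rw [distLap, sub_mulVec, Pi.sub_apply, mulVec_diagonal]
  rfl

theorem distLap_mulVec_one : distLap G *ᵥ 1 = 0 := by
  ext u
  simp [distLap_mulVec_apply, transm]

theorem trace_distLap : (distLap G).trace = 2 * wiener G := by
  simp [distLap, wiener, trace, mul_div_cancel₀]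

theorem dotProduct_distLap_mulVec (x : Fin n → ℝ) :
    x ⬝ᵥ (distLap G *ᵥ x) = (∑ u, ∑ w, (G.dist u w : ℝ) * (x u - x w) ^ 2) / 2 := by
  have hswap : ∑ u, ∑ w, (G.dist u w : ℝ) * x w ^ 2 = ∑ u, ∑ w, (G.dist u w : ℝ) * x u ^ 2 := by
    rw [sum_comm]
    simp_rw [SimpleGraph.dist_comm]
  have hexpand :
      x ⬝ᵥ (distLap G *ᵥ x) = ∑ u, ∑ w, (G.dist u w : ℝ) * (x u ^ 2 - x u * x w) := by
    simp only [dotProduct, distLap_mulVec_apply, transm, sum_mul, mul_sub, mul_sum,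
      ← sum_sub_distrib]
    exact sum_congr rfl fun u _ => sum_congr rfl fun w _ => by ring
  have hsq : ∀ u w, (G.dist u w : ℝ) * (x u - x w) ^ 2 =
      2 * ((G.dist u w : ℝ) * (x u ^ 2 - x u * x w)) +
        ((G.dist u w : ℝ) * x w ^ 2 - (G.dist u w : ℝ) * x u ^ 2) := fun u w => by ring
  simp only [hsq, sum_add_distrib, sum_sub_distrib, ← mul_sum, hswap, hexpand]
  ring

theorem distLap_posSemidef : (distLap G).PosSemidef := by
  refine posSemidef_iff_dotProduct_mulVec.mpr ⟨distLap_isHermitian G, fun x => ?_⟩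
  rw [star_trivial, dotProduct_distLap_mulVec]
  positivity

end DistanceLaplacian

namespace IsDLSpec

variable {n : ℕ} {G : SimpleGraph (Fin n)} {μ : Fin n → ℝ}

theorem spectrum_eq (hμ : IsDLSpec G μ) : spectrum ℝ (distLap G) = Set.range μ :=
  spectrum_eq_range_of_charpoly_eq_prod hμ

theorem nonneg (hμ : IsDLSpec G μ) (i : Fin n) : 0 ≤ μ i :=
  (posSemidef_iff_isHermitian_and_spectrum_nonneg.1 (distLap_posSemidef G)).2
    (hμ.spectrum_eq ▸ ⟨i, rfl⟩)

theorem sum_eq (hμ : IsDLSpec G μ) : ∑ i, μ i = 2 * wiener G := by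
  rw [← trace_eq_sum_of_charpoly_eq_prod hμ, trace_distLap]

theorem mul_transm_le (hμ : IsDLSpec G μ) (hmono : Antitone μ) (v : Fin n) :
    n * transm G v ≤ (n - 1) * μ ⟨0, v.pos⟩ := by
  set x : Fin n → ℝ := (n : ℝ) • Pi.single v 1 - (1 : ℝ) • 1
  have hquad : x ⬝ᵥ (distLap G *ᵥ x) = n ^ 2 * transm G v := by
    rw [(distLap_isSymm G).dotProduct_mulVec_sub_smul_one (distLap_mulVec_one G)]
    simp [mulVec_smul, distLap_apply_self]
    ring
  have hnorm : x ⬝ᵥ x = n * (n - 1) := by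
    simp [x, sub_dotProduct, dotProduct_sub]
  have htop : ∀ r ∈ spectrum ℝ (distLap G), r ≤ μ ⟨0, v.pos⟩ := by
    rw [hμ.spectrum_eq]
    rintro _ ⟨i, rfl⟩
    exact hmono (Nat.zero_le _)
  have hrayleigh := (distLap_isHermitian G).dotProduct_mulVec_le_of_spectrum_le htop x
  rw [hquad, hnorm] at hrayleigh
  have hn : (0 : ℝ) < n := by exact_mod_cast v.pos
  nlinarith

theorem mul_le_two_mul_wiener (hμ : IsDLSpec G μ) (hmono : Antitone μ) (hn : 2 ≤ n) :
    (n - 1) * μ ⟨n - 2, Nat.sub_lt_self two_pos hn⟩ ≤ 2 * wiener G := by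
  have h := hmono.succ_nsmul_le_sum hμ.nonneg ⟨n - 2, Nat.sub_lt_self two_pos hn⟩
  have hcast : ((n - 2 + 1 : ℕ) : ℝ) = n - 1 := by
    rw [show n - 2 + 1 = n - 1 by omega, Nat.cast_sub (by omega), Nat.cast_one]
  rwa [nsmul_eq_mul, hμ.sum_eq, Fin.val_mk, hcast] at h

end IsDLSpec

theorem dls_lower_diam_wiener (n : ℕ) (hn : 2 ≤ n) (G : SimpleGraph (Fin n))
    (hG : G.Connected) (μ : Fin n → ℝ) (hμ : IsDLSpec G μ) (hmono : Antitone μ) :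
    (2 * (n : ℝ) + (G.diam : ℝ) ^ 2 - 2 * (G.diam : ℝ) + 1) / 2 -
        2 * wiener G / ((n : ℝ) - 1)
      ≤ μ ⟨0, by omega⟩ - μ ⟨n - 2, by omega⟩ := by
  have : Nontrivial (Fin n) := Fin.nontrivial_iff_two_le.mpr hn
  have hn1 : (1 : ℝ) < n := by exact_mod_cast hn
  have hd : (1 : ℝ) ≤ G.diam := by
    exact_mod_cast Nat.one_le_iff_ne_zero.mpr
      (SimpleGraph.diam_ne_zero_of_ediam_ne_top (SimpleGraph.connected_iff_ediam_ne_top.mp hG))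
  obtain ⟨v, w, hvw⟩ := G.exists_dist_eq_diam
  have htransm := hG.le_sum_dist v w
  rw [hvw, Fintype.card_fin] at htransm
  change _ ≤ transm G v at htransm
  have htop : transm G v + 1 ≤ μ ⟨0, by omega⟩ := by
    have := hμ.mul_transm_le hmono v
    have : (n : ℝ) - 1 ≤ transm G v := by nlinarith
    nlinarith
  have hbot : μ ⟨n - 2, by omega⟩ ≤ 2 * wiener G / (n - 1) := by
    rw [le_div_iff₀ (by linarith)]
    linarith [hμ.mul_le_two_mul_wiener hmono hn]
  nlinarith
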